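/- Let k be a field of characteristic zero, k̃/k a quadratic Galois extension with Gal(k̃/k) = {1, σ}, and p(z) = z² + a₁z + a₂ ∈ k[z] a quadratic polynomial with distinct roots (a₁² − 4a₂ ≠ 0). Then the stabilizer of w_p in GL₂(k̃) × GL₂(k) under the Hermitian action equals the disjoint union S ⊔ (τ_p, τ_p)·S, where S is the set of pairs (A_p(c₁,d₁), A_p(c₂,d₂)) with c₁, d₁ ∈ k̃, A_p(c₁,d₁) invertible, and A_p(c₂,d₂) = A_p(c₁,d₁)^{-1} A_p(c₁^σ, d₁^σ)^{-1}; here the entries c₂, d₂ of the second component automatically lie in k (the product A_p(c₁,d₁)^{-1}A_p(c₁^σ,d₁^σ)^{-1} is σ-invariant). -/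

import Mathlib

open Matrix Module
open scoped MatrixGroups

variable {R : Type*} [CommRing R]

/-- The matrix `A_p(c,d)` attached to `p(z) = z² + a₁z + a₂`. -/
def Ap (a₁ a₂ c d : R) : Matrix (Fin 2) (Fin 2) R := !![c, -d; a₂ * d, c - a₁ * d]

/-- The matrix `τ_p` attached to `p(z) = z² + a₁z + a₂`. -/
def taup (a₁ : R) : Matrix (Fin 2) (Fin 2) R := !![-1, 0; -a₁, 1]

/-- The element `w_p` attached to `p(z) = z² + a₁z + a₂`. -/
def wp (a₁ a₂ : R) : Matrix (Fin 2) (Fin 2) R × Matrix (Fin 2) (Fin 2) R :=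
  (!![0, 1; 1, a₁], !![1, a₁; a₁, a₁ ^ 2 - a₂])

namespace ApAux

lemma Ap_congr {a₁ a₂ c d c' d' : R} (hc : c = c') (hd : d = d') :
    Ap a₁ a₂ c d = Ap a₁ a₂ c' d' := by rw [hc, hd]

lemma Ap_mul (a₁ a₂ u v c d : R) :
    Ap a₁ a₂ u v * Ap a₁ a₂ c d =
      Ap a₁ a₂ (u*c - a₂*(v*d)) (u*d + v*c - a₁*(v*d)) := by
  ext i j
  fin_cases i <;> fin_cases j <;>
    simp [Ap, Matrix.mul_apply, Fin.sum_univ_two, Matrix.transpose_apply,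
      Matrix.vecHead, Matrix.vecTail] <;> ring

lemma Ap_comm (a₁ a₂ u v c d : R) :
    Ap a₁ a₂ u v * Ap a₁ a₂ c d = Ap a₁ a₂ c d * Ap a₁ a₂ u v := by
  rw [Ap_mul, Ap_mul]; exact Ap_congr (by ring) (by ring)

lemma Ap_det (a₁ a₂ c d : R) : (Ap a₁ a₂ c d).det = c*c - a₁*(c*d) + a₂*(d*d) := by
  simp [Ap, Matrix.det_fin_two_of]; ring

lemma Ap_w1 (a₁ a₂ c d : R) :
    Ap a₁ a₂ c d * !![0, 1; 1, a₁] = !![0, 1; 1, a₁] * (Ap a₁ a₂ c d)ᵀ := by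
  ext i j
  fin_cases i <;> fin_cases j <;>
    simp [Ap, Matrix.mul_apply, Fin.sum_univ_two, Matrix.transpose_apply,
      Matrix.vecHead, Matrix.vecTail] <;> ring

lemma comb_w (a₁ a₂ c d : R) :
    c • !![0, 1; 1, a₁] + d • !![(1:R), a₁; a₁, a₁ ^ 2 - a₂] =
      Ap a₁ a₂ c (-d) * !![0, 1; 1, a₁] := by
  ext i j
  fin_cases i <;> fin_cases j <;>
    simp [Ap, Matrix.mul_apply, Fin.sum_univ_two, Matrix.transpose_apply,
      Matrix.vecHead, Matrix.vecTail] <;> ring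

lemma Ap_w2 (a₁ a₂ : R) :
    Ap a₁ a₂ 0 (-1) * !![0, 1; 1, a₁] = !![(1:R), a₁; a₁, a₁ ^ 2 - a₂] := by
  ext i j
  fin_cases i <;> fin_cases j <;>
    simp [Ap, Matrix.mul_apply, Fin.sum_univ_two, Matrix.transpose_apply,
      Matrix.vecHead, Matrix.vecTail] <;> ring

lemma tau_w1 (a₁ : R) :
    taup a₁ * !![0, 1; 1, a₁] * (taup a₁)ᵀ = -!![0, 1; 1, a₁] := by
  ext i j
  fin_cases i <;> fin_cases j <;>
    simp [taup, Matrix.mul_apply, Fin.sum_univ_two, Matrix.transpose_apply,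
      Matrix.vecHead, Matrix.vecTail] <;> ring

lemma tau_w2 (a₁ a₂ : R) :
    taup a₁ * (Ap a₁ a₂ (-a₁) (-1) * !![0, 1; 1, a₁]) * (taup a₁)ᵀ =
      !![(1:R), a₁; a₁, a₁ ^ 2 - a₂] := by
  ext i j
  fin_cases i <;> fin_cases j <;>
    simp [taup, Ap, Matrix.mul_apply, Fin.sum_univ_two, Matrix.transpose_apply,
      Matrix.vecHead, Matrix.vecTail] <;> ring

lemma tau_sq (a₁ : R) : taup a₁ * taup a₁ = 1 := by
  ext i j
  fin_cases i <;> fin_cases j <;>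
    simp [taup, Matrix.mul_apply, Fin.sum_univ_two, Matrix.transpose_apply,
      Matrix.vecHead, Matrix.vecTail]

lemma tau_det (a₁ : R) : (taup a₁).det = -1 := by
  simp [taup, Matrix.det_fin_two_of]

lemma w1_det (a₁ : R) : (!![0, 1; 1, a₁]).det = -1 := by
  simp [Matrix.det_fin_two_of]

lemma Ap_map {S : Type*} [CommRing S] (f : R →+* S) (a₁ a₂ c d : R) :
    (Ap a₁ a₂ c d).map f = Ap (f a₁) (f a₂) (f c) (f d) := by
  ext i j
  fin_cases i <;> fin_cases j <;> simp [Ap]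

lemma Ap_neg (a₁ a₂ c d : R) : Ap a₁ a₂ (-c) (-d) = -Ap a₁ a₂ c d := by
  ext i j
  fin_cases i <;> fin_cases j <;> simp [Ap] <;> ring

lemma tau_Ap (a₁ a₂ c d : R) :
    taup a₁ * Ap a₁ a₂ c d = !![-c, d; a₂*d - a₁*c, c] := by
  ext i j
  fin_cases i <;> fin_cases j <;>
    simp [taup, Ap, Matrix.mul_apply, Fin.sum_univ_two, Matrix.transpose_apply,
      Matrix.vecHead, Matrix.vecTail] <;> ring

lemma Ap_trace (a₁ a₂ c d : R) : (Ap a₁ a₂ c d).trace = c + (c - a₁ * d) := by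
  simp [Ap, Matrix.trace_fin_two_of]

lemma mul_cancel_right {X Y C : Matrix (Fin 2) (Fin 2) R} (hC : IsUnit C.det)
    (h : X * C = Y * C) : X = Y := by
  have := congrArg (· * C⁻¹) h
  simpa [Matrix.mul_assoc, Matrix.mul_nonsing_inv _ hC] using this

lemma cent1 {a₁ a₂ : R} {m : Matrix (Fin 2) (Fin 2) R}
    (h : m * Ap a₁ a₂ 0 (-1) = Ap a₁ a₂ 0 (-1) * m) :
    m = Ap a₁ a₂ (m 0 0) (-(m 0 1)) := by
  have h00 := congrFun (congrFun h 0) 0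
  have h01 := congrFun (congrFun h 0) 1
  simp [Ap, Matrix.mul_apply, Fin.sum_univ_two] at h00 h01
  ext i j
  fin_cases i <;> fin_cases j <;>
    simp [Ap, Matrix.vecHead, Matrix.vecTail]
  · linear_combination -h00
  · linear_combination -h01

lemma cent2 {a₁ a₂ : R} {m : Matrix (Fin 2) (Fin 2) R}
    (h : m * Ap a₁ a₂ a₁ 1 = Ap a₁ a₂ 0 (-1) * m) :
    taup a₁ * m = Ap a₁ a₂ (-(m 0 0)) (m 0 1) := by
  have h00 := congrFun (congrFun h 0) 0
  have h01 := congrFun (congrFun h 0) 1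
  simp [Ap, Matrix.mul_apply, Fin.sum_univ_two] at h00 h01
  ext i j
  fin_cases i <;> fin_cases j <;>
    simp [Ap, taup, Matrix.mul_apply, Fin.sum_univ_two, Matrix.vecHead, Matrix.vecTail]
  · linear_combination -h00
  · linear_combination -h01

end ApAux

section Hermitian

variable {k kt : Type*} [Field k] [Field kt] [Algebra k kt]

/-- The Hermitian action of `GL₂(k̃) × GL₂(k)` on pairs of `2 × 2` matrices over `k̃`, given
by `M_{g·x}(v) = g₁ M_x(v g₂) ᵗ(g₁^σ)` where `M_x(v) = v₁x₁ + v₂x₂`. -/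
def actH (σ : kt ≃ₐ[k] kt) (g : GL (Fin 2) kt × GL (Fin 2) k)
    (x : Matrix (Fin 2) (Fin 2) kt × Matrix (Fin 2) (Fin 2) kt) :
    Matrix (Fin 2) (Fin 2) kt × Matrix (Fin 2) (Fin 2) kt :=
  ((g.1 : Matrix (Fin 2) (Fin 2) kt) *
      (algebraMap k kt ((g.2 : Matrix (Fin 2) (Fin 2) k) 0 0) • x.1 +
        algebraMap k kt ((g.2 : Matrix (Fin 2) (Fin 2) k) 0 1) • x.2) *
      (((g.1 : Matrix (Fin 2) (Fin 2) kt)).map σ)ᵀ,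
   (g.1 : Matrix (Fin 2) (Fin 2) kt) *
      (algebraMap k kt ((g.2 : Matrix (Fin 2) (Fin 2) k) 1 0) • x.1 +
        algebraMap k kt ((g.2 : Matrix (Fin 2) (Fin 2) k) 1 1) • x.2) *
      (((g.1 : Matrix (Fin 2) (Fin 2) kt)).map σ)ᵀ)

/-- The set `S` of pairs `(A_p(c₁,d₁), A_p(c₂,d₂))` with `c₁, d₁ ∈ k̃`, `c₂, d₂ ∈ k`,
`A_p(c₁,d₁)` invertible and `A_p(c₂,d₂) = A_p(c₁,d₁)⁻¹ A_p(c₁^σ,d₁^σ)⁻¹`. -/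
def SetSH (σ : kt ≃ₐ[k] kt) (a₁ a₂ : k) : Set (GL (Fin 2) kt × GL (Fin 2) k) :=
  {g | ∃ (c₁ d₁ : kt) (c₂ d₂ : k),
    IsUnit (Ap (algebraMap k kt a₁) (algebraMap k kt a₂) c₁ d₁).det ∧
    (g.1 : Matrix (Fin 2) (Fin 2) kt) = Ap (algebraMap k kt a₁) (algebraMap k kt a₂) c₁ d₁ ∧
    (g.2 : Matrix (Fin 2) (Fin 2) k) = Ap a₁ a₂ c₂ d₂ ∧
    (Ap a₁ a₂ c₂ d₂).map (algebraMap k kt) =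
      (Ap (algebraMap k kt a₁) (algebraMap k kt a₂) c₁ d₁)⁻¹ *
        (Ap (algebraMap k kt a₁) (algebraMap k kt a₂) (σ c₁) (σ d₁))⁻¹}

/-- The translate `(τ_p, τ_p)·S` of the set `SetSH`. -/
def SetTH (σ : kt ≃ₐ[k] kt) (a₁ a₂ : k) : Set (GL (Fin 2) kt × GL (Fin 2) k) :=
  {g | ∃ (c₁ d₁ : kt) (c₂ d₂ : k),
    IsUnit (Ap (algebraMap k kt a₁) (algebraMap k kt a₂) c₁ d₁).det ∧
    (g.1 : Matrix (Fin 2) (Fin 2) kt) =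
      taup (algebraMap k kt a₁) * Ap (algebraMap k kt a₁) (algebraMap k kt a₂) c₁ d₁ ∧
    (g.2 : Matrix (Fin 2) (Fin 2) k) = taup a₁ * Ap a₁ a₂ c₂ d₂ ∧
    (Ap a₁ a₂ c₂ d₂).map (algebraMap k kt) =
      (Ap (algebraMap k kt a₁) (algebraMap k kt a₂) c₁ d₁)⁻¹ *
        (Ap (algebraMap k kt a₁) (algebraMap k kt a₂) (σ c₁) (σ d₁))⁻¹}

namespace ApAux

variable (σ : kt ≃ₐ[k] kt) (a₁ a₂ : k)

/-- `σ` applied entrywise to an `Ap` matrix over `kt` with `k`-rational parameters. -/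
lemma sAp (c d : kt) :
    (Ap (algebraMap k kt a₁) (algebraMap k kt a₂) c d).map ⇑σ =
      Ap (algebraMap k kt a₁) (algebraMap k kt a₂) (σ c) (σ d) := by
  ext i j
  fin_cases i <;> fin_cases j <;> simp [Ap, σ.commutes]

lemma sMul (M N : Matrix (Fin 2) (Fin 2) kt) :
    (M * N).map ⇑σ = M.map ⇑σ * N.map ⇑σ :=
  Matrix.map_mul (f := (σ : kt →+* kt))

lemma sDet (M : Matrix (Fin 2) (Fin 2) kt) : (M.map ⇑σ).det = σ M.det :=
  ((σ : kt →+* kt).map_det M).symm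

lemma sTaup : (taup (algebraMap k kt a₁)).map ⇑σ = taup (algebraMap k kt a₁) := by
  ext i j
  fin_cases i <;> fin_cases j <;> simp [taup, σ.commutes]

/-- From the inverse relation we get a product-one relation. -/
lemma hone_of_rel {c₁ d₁ : kt} {c₂ d₂ : k}
    (hu : IsUnit (Ap (algebraMap k kt a₁) (algebraMap k kt a₂) c₁ d₁).det)
    (hrel : (Ap a₁ a₂ c₂ d₂).map (algebraMap k kt) =
      (Ap (algebraMap k kt a₁) (algebraMap k kt a₂) c₁ d₁)⁻¹ *
        (Ap (algebraMap k kt a₁) (algebraMap k kt a₂) (σ c₁) (σ d₁))⁻¹) :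
    Ap (algebraMap k kt a₁) (algebraMap k kt a₂) (σ c₁) (σ d₁) *
      Ap (algebraMap k kt a₁) (algebraMap k kt a₂) c₁ d₁ *
      Ap (algebraMap k kt a₁) (algebraMap k kt a₂)
        (algebraMap k kt c₂) (algebraMap k kt d₂) = 1 := by
  have hus : IsUnit (Ap (algebraMap k kt a₁) (algebraMap k kt a₂) (σ c₁) (σ d₁)).det := by
    have : (Ap (algebraMap k kt a₁) (algebraMap k kt a₂) (σ c₁) (σ d₁)).det =
        σ (Ap (algebraMap k kt a₁) (algebraMap k kt a₂) c₁ d₁).det := by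
      rw [← sAp σ a₁ a₂ c₁ d₁, sDet]
    rw [this]
    exact hu.map (σ : kt →+* kt)
  have h2 : Ap (algebraMap k kt a₁) (algebraMap k kt a₂)
      (algebraMap k kt c₂) (algebraMap k kt d₂) =
      (Ap (algebraMap k kt a₁) (algebraMap k kt a₂) (σ c₁) (σ d₁) *
        Ap (algebraMap k kt a₁) (algebraMap k kt a₂) c₁ d₁)⁻¹ := by
    rw [Matrix.mul_inv_rev, ← Ap_map (algebraMap k kt), hrel]
  rw [h2, Matrix.mul_nonsing_inv]
  rw [Matrix.det_mul]
  exact hus.mul hu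

lemma sandwich {t A Q As W C V : Matrix (Fin 2) (Fin 2) R}
    (h1 : A * Q * As = C) (h2 : W * Asᵀ = As * W) (h3 : t * (C * W) * tᵀ = V) :
    t * A * (Q * W) * (Asᵀ * tᵀ) = V := by
  have e : t * A * (Q * W) * (Asᵀ * tᵀ) = (t * A * Q) * (W * Asᵀ) * tᵀ := by
    simp only [Matrix.mul_assoc]
  rw [e, h2]
  have e2 : (t * A * Q) * (As * W) = t * (C * W) := by
    rw [← h1]; simp only [Matrix.mul_assoc]
  rw [e2]; exact h3

lemma Ap_apply00 (a₁ a₂ c d : R) : Ap a₁ a₂ c d 0 0 = c := rfl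
lemma Ap_apply01 (a₁ a₂ c d : R) : Ap a₁ a₂ c d 0 1 = -d := rfl
lemma Ap_apply10 (a₁ a₂ c d : R) : Ap a₁ a₂ c d 1 0 = a₂ * d := rfl
lemma Ap_apply11 (a₁ a₂ c d : R) : Ap a₁ a₂ c d 1 1 = c - a₁ * d := rfl

end ApAux

open ApAux

namespace ApAux

variable {σ : kt ≃ₐ[k] kt} {a₁ a₂ : k}

lemma memS_stab {g : GL (Fin 2) kt × GL (Fin 2) k} (hg : g ∈ SetSH σ a₁ a₂) :
    actH σ g (wp (algebraMap k kt a₁) (algebraMap k kt a₂)) =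
      wp (algebraMap k kt a₁) (algebraMap k kt a₂) := by
  obtain ⟨c₁, d₁, c₂, d₂, hu, hg1, hg2, hrel⟩ := hg
  have hone := hone_of_rel σ a₁ a₂ hu hrel
  simp only [actH, wp]
  rw [hg1, hg2]
  rw [Ap_apply00, Ap_apply01, Ap_apply10, Ap_apply11, sAp]
  set A1 := algebraMap k kt a₁ with hA1
  set A2 := algebraMap k kt a₂ with hA2
  set A := Ap A1 A2 c₁ d₁ with hA
  set As := Ap A1 A2 (σ c₁) (σ d₁) with hAs
  set Q := Ap A1 A2 (algebraMap k kt c₂) (algebraMap k kt d₂) with hQ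
  simp only [Prod.mk.injEq]
  constructor
  · rw [map_neg, comb_w, neg_neg]
    have h3 : A * Q * As = As * A * Q := by
      simp only [hA, hAs, hQ, Ap_mul]; exact Ap_congr (by ring) (by ring)
    calc A * (Q * !![0, 1; 1, A1]) * Asᵀ
        = (A * Q) * (!![0, 1; 1, A1] * Asᵀ) := by
          rw [← Matrix.mul_assoc, Matrix.mul_assoc]
      _ = (A * Q) * (As * !![0, 1; 1, A1]) := by rw [hAs, ← Ap_w1]
      _ = (As * A * Q) * !![0, 1; 1, A1] := by rw [← Matrix.mul_assoc, h3]
      _ = !![0, 1; 1, A1] := by rw [hone, one_mul]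
  · rw [comb_w]
    have hQ2 : Ap A1 A2 (algebraMap k kt (a₂ * d₂)) (-(algebraMap k kt (c₂ - a₁ * d₂))) =
        Ap A1 A2 0 (-1) * Q := by
      rw [hQ, Ap_mul]
      exact Ap_congr (by rw [_root_.map_mul, hA2]; ring) (by rw [map_sub, _root_.map_mul, hA1]; ring)
    rw [hQ2]
    have h4 : A * (Ap A1 A2 0 (-1) * Q) * As = Ap A1 A2 0 (-1) * (As * A * Q) := by
      simp only [hA, hAs, hQ, Ap_mul]; exact Ap_congr (by ring) (by ring)
    calc A * (Ap A1 A2 0 (-1) * Q * !![0, 1; 1, A1]) * Asᵀ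
        = (A * (Ap A1 A2 0 (-1) * Q)) * (!![0, 1; 1, A1] * Asᵀ) := by
          rw [← Matrix.mul_assoc, ← Matrix.mul_assoc, Matrix.mul_assoc]
      _ = (A * (Ap A1 A2 0 (-1) * Q)) * (As * !![0, 1; 1, A1]) := by rw [hAs, ← Ap_w1]
      _ = (A * (Ap A1 A2 0 (-1) * Q) * As) * !![0, 1; 1, A1] := by
          rw [← Matrix.mul_assoc]
      _ = (Ap A1 A2 0 (-1) * (As * A * Q)) * !![0, 1; 1, A1] := by rw [h4]
      _ = Ap A1 A2 0 (-1) * !![0, 1; 1, A1] := by rw [hone, mul_one]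
      _ = !![1, A1; A1, A1 ^ 2 - A2] := Ap_w2 A1 A2

lemma memT_stab {g : GL (Fin 2) kt × GL (Fin 2) k} (hg : g ∈ SetTH σ a₁ a₂) :
    actH σ g (wp (algebraMap k kt a₁) (algebraMap k kt a₂)) =
      wp (algebraMap k kt a₁) (algebraMap k kt a₂) := by
  obtain ⟨c₁, d₁, c₂, d₂, hu, hg1, hg2, hrel⟩ := hg
  have hone := hone_of_rel σ a₁ a₂ hu hrel
  simp only [actH, wp]
  rw [hg1, hg2]
  have e00 : (taup a₁ * Ap a₁ a₂ c₂ d₂) 0 0 = -c₂ := by rw [tau_Ap]; rfl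
  have e01 : (taup a₁ * Ap a₁ a₂ c₂ d₂) 0 1 = d₂ := by rw [tau_Ap]; rfl
  have e10 : (taup a₁ * Ap a₁ a₂ c₂ d₂) 1 0 = a₂ * d₂ - a₁ * c₂ := by rw [tau_Ap]; rfl
  have e11 : (taup a₁ * Ap a₁ a₂ c₂ d₂) 1 1 = c₂ := by rw [tau_Ap]; rfl
  rw [e00, e01, e10, e11, sMul, sTaup, sAp]
  set A1 := algebraMap k kt a₁ with hA1
  set A2 := algebraMap k kt a₂ with hA2
  set A := Ap A1 A2 c₁ d₁ with hA
  set As := Ap A1 A2 (σ c₁) (σ d₁) with hAs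
  set Q := Ap A1 A2 (algebraMap k kt c₂) (algebraMap k kt d₂) with hQ
  rw [Matrix.transpose_mul]
  simp only [Prod.mk.injEq]
  constructor
  · rw [map_neg, comb_w, Ap_neg]
    have h1 : A * Q * As = (1 : Matrix (Fin 2) (Fin 2) kt) := by
      rw [show A * Q * As = As * A * Q from by
        simp only [hA, hAs, hQ, Ap_mul]; exact Ap_congr (by ring) (by ring)]
      exact hone
    have h2 : !![0, 1; 1, A1] * Asᵀ = As * !![0, 1; 1, A1] := by rw [hAs, ← Ap_w1]
    have h3 : taup A1 * ((1 : Matrix (Fin 2) (Fin 2) kt) * !![0, 1; 1, A1]) * (taup A1)ᵀ =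
        -(!![0, 1; 1, A1]) := by rw [one_mul]; exact tau_w1 A1
    have key := sandwich h1 h2 h3
    simp only [Matrix.neg_mul, Matrix.mul_neg] at *
    rw [key, neg_neg]
  · rw [comb_w]
    have hQ2 : Ap A1 A2 (algebraMap k kt (a₂ * d₂ - a₁ * c₂)) (-(algebraMap k kt c₂)) =
        Ap A1 A2 (-A1) (-1) * Q := by
      rw [hQ, Ap_mul]
      exact Ap_congr
        (by rw [map_sub, _root_.map_mul, _root_.map_mul, hA1, hA2]; ring) (by ring)
    rw [hQ2]
    have h1 : A * (Ap A1 A2 (-A1) (-1) * Q) * As = Ap A1 A2 (-A1) (-1) := by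
      rw [show A * (Ap A1 A2 (-A1) (-1) * Q) * As = Ap A1 A2 (-A1) (-1) * (As * A * Q) from by
        simp only [hA, hAs, hQ, Ap_mul]; exact Ap_congr (by ring) (by ring), hone, mul_one]
    have h2 : !![0, 1; 1, A1] * Asᵀ = As * !![0, 1; 1, A1] := by rw [hAs, ← Ap_w1]
    have h3 := tau_w2 A1 A2
    exact sandwich h1 h2 h3

end ApAux

namespace ApAux

local notation "𝔽" => algebraMap k kt

lemma stab_mem [CharZero k] {σ : kt ≃ₐ[k] kt} {a₁ a₂ : k} (hp : a₁ ^ 2 - 4 * a₂ ≠ 0)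
    {g : GL (Fin 2) kt × GL (Fin 2) k}
    (h : actH σ g (wp (𝔽 a₁) (𝔽 a₂)) = wp (𝔽 a₁) (𝔽 a₂)) :
    g ∈ SetSH σ a₁ a₂ ∪ SetTH σ a₁ a₂ := by
  have h1 := congrArg Prod.fst h
  have h2 := congrArg Prod.snd h
  simp only [actH, wp] at h1 h2
  set m := (g.1 : Matrix (Fin 2) (Fin 2) kt) with hmdef
  set n := (g.2 : Matrix (Fin 2) (Fin 2) k) with hndef
  rw [comb_w] at h1 h2
  -- units
  have hmu : IsUnit m.det := (Matrix.isUnit_iff_isUnit_det _).mp g.1.isUnit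
  have hmu' : m.det ≠ 0 := hmu.ne_zero
  have w1u : IsUnit (!![0, 1; 1, 𝔽 a₁]).det := by
    rw [w1_det]; exact isUnit_one.neg
  -- determinant of P1 is nonzero
  have hdet1 := congrArg Matrix.det h1
  simp only [Matrix.det_mul, Matrix.det_transpose] at hdet1
  rw [w1_det] at hdet1
  have hP1u : (Ap (𝔽 a₁) (𝔽 a₂) (𝔽 (n 0 0)) (-(𝔽 (n 0 1)))).det ≠ 0 := by
    intro h0
    rw [h0] at hdet1
    norm_num at hdet1
  -- the key multiplicative relation
  have hcancel : m * Ap (𝔽 a₁) (𝔽 a₂) (𝔽 (n 1 0)) (-(𝔽 (n 1 1))) =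
      Ap (𝔽 a₁) (𝔽 a₂) 0 (-1) *
        (m * Ap (𝔽 a₁) (𝔽 a₂) (𝔽 (n 0 0)) (-(𝔽 (n 0 1)))) := by
    have hCu : IsUnit ((!![0, 1; 1, 𝔽 a₁] : Matrix (Fin 2) (Fin 2) kt) * (m.map ⇑σ)ᵀ).det := by
      rw [Matrix.det_mul, w1_det, Matrix.det_transpose, sDet]
      refine (isUnit_iff_ne_zero).mpr ?_
      simp only [neg_mul, ne_eq, neg_eq_zero, one_mul]
      exact fun h0 => hmu' (σ.injective (by rw [h0, map_zero]))
    apply mul_cancel_right hCu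
    calc (m * Ap (𝔽 a₁) (𝔽 a₂) (𝔽 (n 1 0)) (-(𝔽 (n 1 1)))) *
          (!![0, 1; 1, 𝔽 a₁] * (m.map ⇑σ)ᵀ)
        = m * (Ap (𝔽 a₁) (𝔽 a₂) (𝔽 (n 1 0)) (-(𝔽 (n 1 1))) * !![0, 1; 1, 𝔽 a₁]) *
            (m.map ⇑σ)ᵀ := by simp only [Matrix.mul_assoc]
      _ = !![1, 𝔽 a₁; 𝔽 a₁, 𝔽 a₁ ^ 2 - 𝔽 a₂] := h2
      _ = Ap (𝔽 a₁) (𝔽 a₂) 0 (-1) * !![0, 1; 1, 𝔽 a₁] := (Ap_w2 (𝔽 a₁) (𝔽 a₂)).symm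
      _ = Ap (𝔽 a₁) (𝔽 a₂) 0 (-1) *
            (m * (Ap (𝔽 a₁) (𝔽 a₂) (𝔽 (n 0 0)) (-(𝔽 (n 0 1))) * !![0, 1; 1, 𝔽 a₁]) *
              (m.map ⇑σ)ᵀ) := by rw [h1]
      _ = (Ap (𝔽 a₁) (𝔽 a₂) 0 (-1) *
            (m * Ap (𝔽 a₁) (𝔽 a₂) (𝔽 (n 0 0)) (-(𝔽 (n 0 1))))) *
            (!![0, 1; 1, 𝔽 a₁] * (m.map ⇑σ)ᵀ) := by simp only [Matrix.mul_assoc]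
  -- the scalars u, v
  set D : k := n 0 0 * n 0 0 + a₁ * (n 0 0 * n 0 1) + a₂ * (n 0 1 * n 0 1) with hDdef
  have hDkt : 𝔽 D = (Ap (𝔽 a₁) (𝔽 a₂) (𝔽 (n 0 0)) (-(𝔽 (n 0 1)))).det := by
    rw [Ap_det, hDdef]
    simp only [map_add, _root_.map_mul]
    ring
  have hD : D ≠ 0 := fun h0 => hP1u (by rw [← hDkt, h0, map_zero])
  have hex : ∃ u v : k, Ap a₁ a₂ (n 1 0) (-(n 1 1)) =
      Ap a₁ a₂ u v * Ap a₁ a₂ (n 0 0) (-(n 0 1)) := by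
    refine ⟨(n 1 0 * (n 0 0 + a₁ * n 0 1) + a₂ * (n 0 1 * n 1 1)) / D,
      (n 0 1 * n 1 0 - n 0 0 * n 1 1) / D, ?_⟩
    rw [Ap_mul]
    exact Ap_congr (by field_simp [hDdef]; ring) (by field_simp [hDdef]; ring)
  obtain ⟨u, v, hfac⟩ := hex
  have hfac' : Ap (𝔽 a₁) (𝔽 a₂) (𝔽 (n 1 0)) (-(𝔽 (n 1 1))) =
      Ap (𝔽 a₁) (𝔽 a₂) (𝔽 u) (𝔽 v) *
        Ap (𝔽 a₁) (𝔽 a₂) (𝔽 (n 0 0)) (-(𝔽 (n 0 1))) := by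
    have h5 := congrArg (fun M : Matrix (Fin 2) (Fin 2) k => M.map (𝔽 : k →+* kt)) hfac
    simp only [Matrix.map_mul, Ap_map, map_neg] at h5
    exact h5
  have hdiam : m * Ap (𝔽 a₁) (𝔽 a₂) (𝔽 u) (𝔽 v) = Ap (𝔽 a₁) (𝔽 a₂) 0 (-1) * m := by
    apply mul_cancel_right ((isUnit_iff_ne_zero).mpr hP1u)
    calc m * Ap (𝔽 a₁) (𝔽 a₂) (𝔽 u) (𝔽 v) * Ap (𝔽 a₁) (𝔽 a₂) (𝔽 (n 0 0)) (-(𝔽 (n 0 1)))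
        = m * (Ap (𝔽 a₁) (𝔽 a₂) (𝔽 u) (𝔽 v) *
            Ap (𝔽 a₁) (𝔽 a₂) (𝔽 (n 0 0)) (-(𝔽 (n 0 1)))) := by rw [Matrix.mul_assoc]
      _ = m * Ap (𝔽 a₁) (𝔽 a₂) (𝔽 (n 1 0)) (-(𝔽 (n 1 1))) := by rw [← hfac']
      _ = Ap (𝔽 a₁) (𝔽 a₂) 0 (-1) *
            (m * Ap (𝔽 a₁) (𝔽 a₂) (𝔽 (n 0 0)) (-(𝔽 (n 0 1)))) := hcancel
      _ = Ap (𝔽 a₁) (𝔽 a₂) 0 (-1) * m *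
            Ap (𝔽 a₁) (𝔽 a₂) (𝔽 (n 0 0)) (-(𝔽 (n 0 1))) := by rw [Matrix.mul_assoc]
  -- trace and determinant conditions
  have hconj : Ap (𝔽 a₁) (𝔽 a₂) (𝔽 u) (𝔽 v) = m⁻¹ * (Ap (𝔽 a₁) (𝔽 a₂) 0 (-1) * m) := by
    rw [← hdiam, ← Matrix.mul_assoc, Matrix.nonsing_inv_mul m hmu, one_mul]
  have htr : (Ap (𝔽 a₁) (𝔽 a₂) (𝔽 u) (𝔽 v)).trace =
      (Ap (𝔽 a₁) (𝔽 a₂) 0 (-1)).trace := by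
    rw [hconj, Matrix.trace_mul_comm, Matrix.mul_assoc, Matrix.mul_nonsing_inv m hmu,
      Matrix.mul_one]
  rw [Ap_trace, Ap_trace] at htr
  have htrk : u + (u - a₁ * v) = a₁ := by
    apply (algebraMap k kt).injective
    rw [map_add, map_sub, _root_.map_mul]
    linear_combination htr
  have hdetd := congrArg Matrix.det hdiam
  rw [Matrix.det_mul, Matrix.det_mul] at hdetd
  have hdetkt : (Ap (𝔽 a₁) (𝔽 a₂) (𝔽 u) (𝔽 v)).det =
      (Ap (𝔽 a₁) (𝔽 a₂) 0 (-1)).det :=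
    mul_left_cancel₀ hmu' (hdetd.trans (mul_comm _ _))
  rw [Ap_det, Ap_det] at hdetkt
  have hdetk : u * u - a₁ * (u * v) + a₂ * (v * v) = a₂ := by
    apply (algebraMap k kt).injective
    rw [map_add, map_sub, _root_.map_mul, _root_.map_mul, _root_.map_mul, _root_.map_mul,
      _root_.map_mul]
    linear_combination hdetkt
  have hv : (v - 1) * (v + 1) * (a₁ ^ 2 - 4 * a₂) = 0 := by
    linear_combination (2 * u - a₁ * v + a₁) * htrk - 4 * hdetk
  have hv2 : (v - 1) * (v + 1) = 0 := (mul_eq_zero.mp hv).resolve_right hp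
  rcases mul_eq_zero.mp hv2 with hcase | hcase
  · -- v = 1 : the SetTH case
    have hvv : v = 1 := sub_eq_zero.mp hcase
    subst hvv
    have huu : u = a₁ := by
      have h2u : (2 : k) * u = 2 * a₁ := by linear_combination htrk
      exact mul_left_cancel₀ two_ne_zero h2u
    rw [huu] at hdiam hfac
    have hdiam' : m * Ap (𝔽 a₁) (𝔽 a₂) (𝔽 a₁) 1 = Ap (𝔽 a₁) (𝔽 a₂) 0 (-1) * m := by
      simpa using hdiam
    have hcent := cent2 hdiam'
    set c1 := -(m 0 0) with hc1def
    set d1 := m 0 1 with hd1def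
    have hm1 : m = taup (𝔽 a₁) * Ap (𝔽 a₁) (𝔽 a₂) c1 d1 := by
      rw [← hcent, ← Matrix.mul_assoc, tau_sq, one_mul]
    refine Or.inr ⟨c1, d1, -(n 0 0), n 0 1, ?_, ?_, ?_, ?_⟩
    · have hdA : (Ap (𝔽 a₁) (𝔽 a₂) c1 d1).det = -1 * m.det := by
        rw [← hcent, Matrix.det_mul, tau_det]
      rw [hdA]
      exact isUnit_one.neg.mul hmu
    · exact hm1
    · rw [tau_Ap]
      rw [Ap_mul] at hfac
      have q1 : n 1 0 = a₁ * n 0 0 - a₂ * (1 * -(n 0 1)) := congrFun (congrFun hfac 0) 0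
      have q2 : -(-(n 1 1)) = -(a₁ * -(n 0 1) + 1 * n 0 0 - a₁ * (1 * -(n 0 1))) :=
        congrFun (congrFun hfac 0) 1
      ext i j
      fin_cases i <;> fin_cases j
      · exact (neg_neg _).symm
      · rfl
      · show n 1 0 = a₂ * n 0 1 - a₁ * -(n 0 0)
        linear_combination q1
      · show n 1 1 = -(n 0 0)
        linear_combination q2
    · -- the inverse relation
      have hAs : m.map ⇑σ = taup (𝔽 a₁) * Ap (𝔽 a₁) (𝔽 a₂) (σ c1) (σ d1) := by
        conv_lhs => rw [hm1]
        rw [sMul, sTaup, sAp]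
      rw [hAs, Matrix.transpose_mul, hm1] at h1
      have tt : (taup (𝔽 a₁))ᵀ * (taup (𝔽 a₁))ᵀ = (1 : Matrix (Fin 2) (Fin 2) kt) := by
        rw [← Matrix.transpose_mul, tau_sq, Matrix.transpose_one]
      have e1 := congrArg
        (fun X : Matrix (Fin 2) (Fin 2) kt => taup (𝔽 a₁) * X * (taup (𝔽 a₁))ᵀ) h1
      rw [tau_w1] at e1
      simp only [Matrix.mul_assoc] at e1
      rw [tt, Matrix.mul_one] at e1
      rw [← Matrix.mul_assoc, tau_sq, one_mul, ← Ap_w1] at e1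
      have hXW : (Ap (𝔽 a₁) (𝔽 a₂) c1 d1 *
          Ap (𝔽 a₁) (𝔽 a₂) (𝔽 (n 0 0)) (-(𝔽 (n 0 1))) *
          Ap (𝔽 a₁) (𝔽 a₂) (σ c1) (σ d1)) * !![0, 1; 1, 𝔽 a₁] =
          (-1 : Matrix (Fin 2) (Fin 2) kt) * !![0, 1; 1, 𝔽 a₁] := by
        rw [neg_one_mul]
        simp only [Matrix.mul_assoc]
        exact e1
      have hX : Ap (𝔽 a₁) (𝔽 a₂) c1 d1 *
          Ap (𝔽 a₁) (𝔽 a₂) (𝔽 (n 0 0)) (-(𝔽 (n 0 1))) *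
          Ap (𝔽 a₁) (𝔽 a₂) (σ c1) (σ d1) = -1 := mul_cancel_right w1u hXW
      have hE3 : (Ap (𝔽 a₁) (𝔽 a₂) (σ c1) (σ d1) * Ap (𝔽 a₁) (𝔽 a₂) c1 d1) *
          (-(Ap (𝔽 a₁) (𝔽 a₂) (𝔽 (n 0 0)) (-(𝔽 (n 0 1))))) = 1 := by
        rw [Matrix.mul_neg]
        rw [show (Ap (𝔽 a₁) (𝔽 a₂) (σ c1) (σ d1) * Ap (𝔽 a₁) (𝔽 a₂) c1 d1) *
            Ap (𝔽 a₁) (𝔽 a₂) (𝔽 (n 0 0)) (-(𝔽 (n 0 1))) =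
            Ap (𝔽 a₁) (𝔽 a₂) c1 d1 * Ap (𝔽 a₁) (𝔽 a₂) (𝔽 (n 0 0)) (-(𝔽 (n 0 1))) *
            Ap (𝔽 a₁) (𝔽 a₂) (σ c1) (σ d1) from by
          simp only [Ap_mul]; exact Ap_congr (by ring) (by ring)]
        rw [hX]
        exact neg_neg 1
      have hgoal : (Ap a₁ a₂ (-(n 0 0)) (n 0 1)).map (𝔽 : k →+* kt) =
          -(Ap (𝔽 a₁) (𝔽 a₂) (𝔽 (n 0 0)) (-(𝔽 (n 0 1)))) := by
        rw [Ap_map, map_neg]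
        rw [show Ap (𝔽 a₁) (𝔽 a₂) (-(𝔽 (n 0 0))) (𝔽 (n 0 1)) =
            Ap (𝔽 a₁) (𝔽 a₂) (-(𝔽 (n 0 0))) (-(-(𝔽 (n 0 1)))) from by rw [neg_neg]]
        exact Ap_neg (𝔽 a₁) (𝔽 a₂) (𝔽 (n 0 0)) (-(𝔽 (n 0 1)))
      rw [hgoal, ← Matrix.mul_inv_rev]
      exact (Matrix.inv_eq_right_inv hE3).symm
  · -- v = -1 : the SetSH case
    have hvv : v = -1 := eq_neg_of_add_eq_zero_left hcase
    subst hvv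
    have huu : u = 0 := by
      have h2u : (2 : k) * u = 0 := by linear_combination htrk
      exact (mul_eq_zero.mp h2u).resolve_left two_ne_zero
    subst huu
    have hdiam' : m * Ap (𝔽 a₁) (𝔽 a₂) 0 (-1) = Ap (𝔽 a₁) (𝔽 a₂) 0 (-1) * m := by
      simpa using hdiam
    have hmAp := cent1 hdiam'
    set c1 := m 0 0 with hc1def
    set d1 := -(m 0 1) with hd1def
    refine Or.inl ⟨c1, d1, n 0 0, -(n 0 1), ?_, ?_, ?_, ?_⟩
    · rw [← hmAp]; exact hmu
    · exact hmAp
    · rw [Ap_mul] at hfac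
      have q1 : n 1 0 = 0 * n 0 0 - a₂ * (-1 * -(n 0 1)) := congrFun (congrFun hfac 0) 0
      have q2 : -(-(n 1 1)) =
          -(0 * -(n 0 1) + -1 * n 0 0 - a₁ * (-1 * -(n 0 1))) := congrFun (congrFun hfac 0) 1
      ext i j
      fin_cases i <;> fin_cases j
      · rfl
      · exact (neg_neg _).symm
      · show n 1 0 = a₂ * -(n 0 1)
        linear_combination q1
      · show n 1 1 = n 0 0 - a₁ * -(n 0 1)
        linear_combination q2
    · -- the inverse relation
      have hAs : m.map ⇑σ = Ap (𝔽 a₁) (𝔽 a₂) (σ c1) (σ d1) := by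
        conv_lhs => rw [hmAp]
        exact sAp σ a₁ a₂ _ _
      rw [hAs] at h1
      have step : (m * Ap (𝔽 a₁) (𝔽 a₂) (𝔽 (n 0 0)) (-(𝔽 (n 0 1))) *
          Ap (𝔽 a₁) (𝔽 a₂) (σ c1) (σ d1)) * !![0, 1; 1, 𝔽 a₁] =
          1 * !![0, 1; 1, 𝔽 a₁] := by
        rw [one_mul]
        calc (m * Ap (𝔽 a₁) (𝔽 a₂) (𝔽 (n 0 0)) (-(𝔽 (n 0 1))) *
            Ap (𝔽 a₁) (𝔽 a₂) (σ c1) (σ d1)) * !![0, 1; 1, 𝔽 a₁]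
            = (m * Ap (𝔽 a₁) (𝔽 a₂) (𝔽 (n 0 0)) (-(𝔽 (n 0 1)))) *
              (Ap (𝔽 a₁) (𝔽 a₂) (σ c1) (σ d1) * !![0, 1; 1, 𝔽 a₁]) := by
                simp only [Matrix.mul_assoc]
          _ = (m * Ap (𝔽 a₁) (𝔽 a₂) (𝔽 (n 0 0)) (-(𝔽 (n 0 1)))) *
              (!![0, 1; 1, 𝔽 a₁] * (Ap (𝔽 a₁) (𝔽 a₂) (σ c1) (σ d1))ᵀ) := by
                rw [Ap_w1]
          _ = m * (Ap (𝔽 a₁) (𝔽 a₂) (𝔽 (n 0 0)) (-(𝔽 (n 0 1))) * !![0, 1; 1, 𝔽 a₁]) *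
              (Ap (𝔽 a₁) (𝔽 a₂) (σ c1) (σ d1))ᵀ := by
                simp only [Matrix.mul_assoc]
          _ = !![0, 1; 1, 𝔽 a₁] := h1
      have hE : m * Ap (𝔽 a₁) (𝔽 a₂) (𝔽 (n 0 0)) (-(𝔽 (n 0 1))) *
          Ap (𝔽 a₁) (𝔽 a₂) (σ c1) (σ d1) = 1 := mul_cancel_right w1u step
      rw [hmAp] at hE
      have hE3 : (Ap (𝔽 a₁) (𝔽 a₂) (σ c1) (σ d1) *
          Ap (𝔽 a₁) (𝔽 a₂) c1 d1) *
          Ap (𝔽 a₁) (𝔽 a₂) (𝔽 (n 0 0)) (-(𝔽 (n 0 1))) = 1 := by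
        rw [show (Ap (𝔽 a₁) (𝔽 a₂) (σ c1) (σ d1) *
            Ap (𝔽 a₁) (𝔽 a₂) c1 d1) *
            Ap (𝔽 a₁) (𝔽 a₂) (𝔽 (n 0 0)) (-(𝔽 (n 0 1))) =
            Ap (𝔽 a₁) (𝔽 a₂) c1 d1 *
            Ap (𝔽 a₁) (𝔽 a₂) (𝔽 (n 0 0)) (-(𝔽 (n 0 1))) *
            Ap (𝔽 a₁) (𝔽 a₂) (σ c1) (σ d1) from by
          simp only [Ap_mul]; exact Ap_congr (by ring) (by ring)]
        exact hE
      have hgoal : (Ap a₁ a₂ (n 0 0) (-(n 0 1))).map (𝔽 : k →+* kt) =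
          Ap (𝔽 a₁) (𝔽 a₂) (𝔽 (n 0 0)) (-(𝔽 (n 0 1))) := by
        rw [Ap_map, map_neg]
      rw [hgoal, ← Matrix.mul_inv_rev]
      exact (Matrix.inv_eq_right_inv hE3).symm

lemma disjSH [CharZero k] {σ : kt ≃ₐ[k] kt} {a₁ a₂ : k} (hp : a₁ ^ 2 - 4 * a₂ ≠ 0) :
    Disjoint (SetSH σ a₁ a₂) (SetTH σ a₁ a₂) := by
  rw [Set.disjoint_left]
  rintro g ⟨c₁, d₁, c₂, d₂, hu, hg1, hg2, hrel⟩ ⟨c₁', d₁', c₂', d₂', hu', hg1', hg2', hrel'⟩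
  have hn : Ap a₁ a₂ c₂ d₂ = taup a₁ * Ap a₁ a₂ c₂' d₂' := hg2.symm.trans hg2'
  rw [tau_Ap] at hn
  have q1 : c₂ = -c₂' := congrFun (congrFun hn 0) 0
  have q2 : -d₂ = d₂' := congrFun (congrFun hn 0) 1
  have q3 : a₂ * d₂ = a₂ * d₂' - a₁ * c₂' := congrFun (congrFun hn 1) 0
  have q4 : c₂ - a₁ * d₂ = c₂' := congrFun (congrFun hn 1) 1
  have hd : d₂ * (a₁ ^ 2 - 4 * a₂) = 0 := by
    linear_combination a₁ * q1 - a₁ * q4 - 2 * q3 + 2 * a₂ * q2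
  have hd2 : d₂ = 0 := (mul_eq_zero.mp hd).resolve_right hp
  have hc2 : c₂ = 0 := by
    have h2c : (2 : k) * c₂ = 0 := by
      subst hd2
      linear_combination q1 + q4
    exact (mul_eq_zero.mp h2c).resolve_left two_ne_zero
  have := (Matrix.isUnit_iff_isUnit_det _).mp g.2.isUnit
  rw [hg2, hd2, hc2, Ap_det] at this
  simpa using this

end ApAux

/-- Lemma 3.4 of the paper: for a quadratic Galois extension `k̃/k` of fields of
characteristic zero with `Gal(k̃/k) = {1, σ}`, the stabilizer of `w_p` in
`GL₂(k̃) × GL₂(k)` under the Hermitian action is the disjoint union of `S` and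
`(τ_p,τ_p)·S`. -/
theorem stabilizer_wp_hermitian [CharZero k] [IsGalois k kt]
    (hdeg : finrank k kt = 2) (σ : kt ≃ₐ[k] kt) (hσ : σ ≠ AlgEquiv.refl)
    (a₁ a₂ : k) (hp : a₁ ^ 2 - 4 * a₂ ≠ 0) :
    {g : GL (Fin 2) kt × GL (Fin 2) k |
        actH σ g (wp (algebraMap k kt a₁) (algebraMap k kt a₂)) =
          wp (algebraMap k kt a₁) (algebraMap k kt a₂)} =
      SetSH σ a₁ a₂ ∪ SetTH σ a₁ a₂ ∧
    Disjoint (SetSH σ a₁ a₂) (SetTH σ a₁ a₂) := by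
  constructor
  · ext g
    simp only [Set.mem_setOf_eq, Set.mem_union]
    constructor
    · intro h
      exact ApAux.stab_mem hp h
    · rintro (hg | hg)
      exacts [ApAux.memS_stab hg, ApAux.memT_stab hg]
  · exact ApAux.disjSH hp

end Hermitian
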